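/- Fix a matroid M with distinct nonnegative weights w and p ∈ (0,1). The random set R of improving elements with parameter p is (1/p)-uncontentious: for every subset F of the ground set, E[|R ∩ F|] ≤ (1/p)·E[rank(R ∩ F)]. -/

import Mathlib

open Finset BigOperators
open scoped Classical

structure FinMatroid (γ : Type*) [DecidableEq γ] [Fintype γ] where
  Indep : Finset γ → Prop
  indep_empty : Indep ∅
  indep_subset : ∀ ⦃A B : Finset γ⦄, Indep B → A ⊆ B → Indep A
  indep_exchange : ∀ ⦃A B : Finset γ⦄, Indep A → Indep B → A.card < B.card →
    ∃ x ∈ B, x ∉ A ∧ Indep (insert x A)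

variable {γ : Type*} [DecidableEq γ] [Fintype γ]

/-- The rank of a set `A`: maximum cardinality of an independent subset of `A`. -/
noncomputable def FinMatroid.rank (M : FinMatroid γ) (A : Finset γ) : ℕ :=
  (A.powerset.filter fun S => M.Indep S).sup Finset.card

/-- The weighted rank of a set `A`: maximum weight of an independent subset of `A`. -/
noncomputable def FinMatroid.wrank (M : FinMatroid γ) (w : γ → ℝ) (A : Finset γ) : ℝ :=
  (A.powerset.filter fun S => M.Indep S).sup'
    ⟨∅, by simp [M.indep_empty]⟩ (fun S => ∑ i ∈ S, w i)

/-- A distribution over subsets of the ground set. -/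
structure FinDist (γ : Type*) [DecidableEq γ] [Fintype γ] where
  p : Finset γ → ℝ
  nonneg : ∀ S, 0 ≤ p S
  sum_one : ∑ S : Finset γ, p S = 1

/-- Marginal probability of element `i` under distribution `D`. -/
noncomputable def FinDist.marg (D : FinDist γ) (i : γ) : ℝ :=
  ∑ R : Finset γ, D.p R * (if i ∈ R then 1 else 0)

/-- A (randomized) contention resolution map: `q R S` is the probability that the map
outputs `S` on input `R`; the output is always an independent subset of the input. -/
structure CRM (M : FinMatroid γ) where
  q : Finset γ → Finset γ → ℝ
  nonneg : ∀ R S, 0 ≤ q R S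
  sum_one : ∀ R, ∑ S : Finset γ, q R S = 1
  feasible : ∀ R S, q R S ≠ 0 → S ⊆ R ∧ M.Indep S

/-- Probability that element `i` is selected by the CRM `φ` when the input is drawn from `D`. -/
noncomputable def selProb (M : FinMatroid γ) (D : FinDist γ) (φ : CRM M) (i : γ) : ℝ :=
  ∑ R : Finset γ, D.p R * ∑ S : Finset γ, φ.q R S * (if i ∈ S then 1 else 0)

/-- `φ` is `a`-competitive for `D` : `Pr[i ∈ R] ≤ a · Pr[i ∈ φ(R)]` for all `i`. -/
def Competitive (M : FinMatroid γ) (D : FinDist γ) (a : ℝ) (φ : CRM M) : Prop :=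
  ∀ i : γ, D.marg i ≤ a * selProb M D φ i

/-- `D` is `a`-uncontentious: it admits an `a`-competitive contention resolution map. -/
def Uncontentious (M : FinMatroid γ) (D : FinDist γ) (a : ℝ) : Prop :=
  ∃ φ : CRM M, Competitive M D a φ

/-- `D` is `a`-uncontentious, weighted-rank form: `E[rank_w(R)] ≥ (1/a)·E[w(R)]` for all `w ≥ 0`. -/
def UncontentiousW (M : FinMatroid γ) (D : FinDist γ) (a : ℝ) : Prop :=
  ∀ w : γ → ℝ, (∀ i, 0 ≤ w i) →
    ∑ R : Finset γ, D.p R * M.wrank w R ≥ (1 / a) * ∑ R : Finset γ, D.p R * ∑ i ∈ R, w i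

/-- Probability of sampling `S` when each of the `n` ground elements is included
independently with probability `p`. -/
noncomputable def prodP (p : ℝ) (S : Finset γ) : ℝ :=
  p ^ S.card * (1 - p) ^ (Fintype.card γ - S.card)

/-- The maximum-weight independent subset of `A` (for distinct positive weights, via the
greedy characterization: `i ∈ OPT_w(A)` iff `w i > 0` and `i` is not spanned by the
higher-weight elements of `A`), excluding zero-weight elements. -/
noncomputable def FinMatroid.OPT (M : FinMatroid γ) (w : γ → ℝ) (A : Finset γ) : Finset γ :=
  A.filter fun i => 0 < w i ∧
    M.rank (A.filter fun j => w i < w j) < M.rank (insert i (A.filter fun j => w i < w j))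

/-- The set of improving elements given the sample `S`: elements outside `S` that
belong to `OPT_w(S ∪ {i})`. -/
noncomputable def FinMatroid.Improving (M : FinMatroid γ) (w : γ → ℝ) (S : Finset γ) : Finset γ :=
  Finset.univ.filter fun i => i ∉ S ∧ i ∈ M.OPT w (insert i S)

/-!
Whether `i` enters `OPT_w(S ∪ {i})` does not depend on whether `i ∈ S`, so by independence of
the coordinates `p · E|R ∩ F| = (1 - p) · E|OPT_w(S) ∩ F|`. Adding `F` to the sample does not
decrease `|OPT_w ∩ F|`: greedy gives `OPT_w(S ∪ F) \ F ⊆ OPT_w(S) \ F`, while `|OPT_w|`, the rank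
of the positive-weight part, is monotone. By independence again,
`(1 - p) · E|OPT_w(S ∪ F) ∩ F| = E|(F \ S) ∩ OPT_w(S ∪ F)|`, and this last set is independent and
contained in `R ∩ F`, so its size is at most `rank(R ∩ F)`.
-/

namespace FinMatroid

variable (M : FinMatroid γ)

lemma card_le_rank {A T : Finset γ} (hTA : T ⊆ A) (hT : M.Indep T) : #T ≤ M.rank A :=
  le_sup (by simp [hTA, hT])

lemma exists_indep_card_eq_rank (A : Finset γ) : ∃ T ⊆ A, M.Indep T ∧ #T = M.rank A := by
  obtain ⟨T, hT, hEq⟩ :=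
    exists_mem_eq_sup (A.powerset.filter M.Indep) ⟨∅, by simp [M.indep_empty]⟩ card
  simp only [mem_filter, mem_powerset] at hT
  exact ⟨T, hT.1, hT.2, hEq.symm⟩

lemma rank_empty : M.rank ∅ = 0 := by
  simp [rank]

lemma rank_mono {A B : Finset γ} (h : A ⊆ B) : M.rank A ≤ M.rank B :=
  Finset.sup_le fun T hT => by
    simp only [mem_filter, mem_powerset] at hT
    exact M.card_le_rank (hT.1.trans h) hT.2

lemma rank_insert_le (A : Finset γ) (i : γ) : M.rank (insert i A) ≤ M.rank A + 1 := by
  obtain ⟨T, hT, hTi, hcard⟩ := M.exists_indep_card_eq_rank (insert i A)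
  have hle := M.card_le_rank (subset_insert_iff.1 hT) (M.indep_subset hTi (erase_subset i T))
  have := pred_card_le_card_erase (s := T) (a := i)
  omega

lemma exists_insert_of_card_lt_rank {I A : Finset γ} (hI : M.Indep I) (h : #I < M.rank A) :
    ∃ x ∈ A, x ∉ I ∧ M.Indep (insert x I) := by
  obtain ⟨T, hTA, hT, hcard⟩ := M.exists_indep_card_eq_rank A
  obtain ⟨x, hxT, hxI, hx⟩ := M.indep_exchange hI hT (hcard ▸ h)
  exact ⟨x, hTA hxT, hxI, hx⟩

lemma exists_superset_indep_card_eq_rank {I A : Finset γ} (hI : M.Indep I) (hIA : I ⊆ A) :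
    ∃ B, I ⊆ B ∧ B ⊆ A ∧ M.Indep B ∧ #B = M.rank A := by
  induction hn : M.rank A - #I generalizing I with
  | zero => exact ⟨I, subset_rfl, hIA, hI, le_antisymm (M.card_le_rank hIA hI) (by omega)⟩
  | succ n ih =>
    obtain ⟨x, hxA, hxI, hx⟩ := M.exists_insert_of_card_lt_rank (A := A) hI (by omega)
    obtain ⟨B, hIB, hBA, hB, hcard⟩ :=
      ih hx (insert_subset hxA hIA) (by rw [card_insert_of_notMem hxI]; omega)
    exact ⟨B, (subset_insert x I).trans hIB, hBA, hB, hcard⟩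

lemma indep_insert_of_rank_lt_rank_insert {I A : Finset γ} {x : γ} (hIA : I ⊆ A)
    (hI : M.Indep I) (hcard : #I = M.rank A) (hx : M.rank A < M.rank (insert x A)) :
    M.Indep (insert x I) := by
  obtain ⟨y, hyA, hyI, hy⟩ := M.exists_insert_of_card_lt_rank hI (hcard ▸ hx)
  obtain rfl | hyA := mem_insert.1 hyA
  · exact hy
  · have := M.card_le_rank (insert_subset hyA hIA) hy
    rw [card_insert_of_notMem hyI] at this
    omega

lemma rank_lt_rank_insert_of_subset {A B : Finset γ} {i : γ} (hAB : A ⊆ B)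
    (h : M.rank B < M.rank (insert i B)) : M.rank A < M.rank (insert i A) := by
  have hiA : i ∉ A := fun hi => by rw [insert_eq_of_mem (hAB hi)] at h; exact lt_irrefl _ h
  obtain ⟨I, hIA, hI, hIcard⟩ := M.exists_indep_card_eq_rank A
  obtain ⟨J, hIJ, hJB, hJ, hJcard⟩ := M.exists_superset_indep_card_eq_rank hI (hIA.trans hAB)
  have hiI : M.Indep (insert i I) :=
    M.indep_subset (M.indep_insert_of_rank_lt_rank_insert hJB hJ hJcard h)
      (insert_subset_insert i hIJ)
  have := M.card_le_rank (insert_subset_insert i hIA) hiI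
  rw [card_insert_of_notMem fun hi => hiA (hIA hi)] at this
  omega

/-- `i` is kept when the greedy algorithm scans `A` in decreasing order of weight. -/
def GreedyPicks (w : γ → ℝ) (A : Finset γ) (i : γ) : Prop :=
  0 < w i ∧ M.rank (A.filter fun j => w i < w j) < M.rank (insert i (A.filter fun j => w i < w j))

variable {M} {w : γ → ℝ}

lemma OPT_eq_filter (A : Finset γ) : M.OPT w A = A.filter (M.GreedyPicks w A) := by
  ext; simp [OPT, GreedyPicks]

lemma greedyPicks_insert_self {A : Finset γ} {i : γ} :
    M.GreedyPicks w (insert i A) i ↔ M.GreedyPicks w A i := by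
  simp [GreedyPicks, filter_insert]

lemma GreedyPicks.anti {A B : Finset γ} {i : γ} (hAB : A ⊆ B) (h : M.GreedyPicks w B i) :
    M.GreedyPicks w A i :=
  ⟨h.1, M.rank_lt_rank_insert_of_subset (filter_subset_filter _ hAB) h.2⟩

lemma mem_improving {S : Finset γ} {i : γ} :
    i ∈ M.Improving w S ↔ i ∉ S ∧ M.GreedyPicks w S i := by
  simp [Improving, OPT_eq_filter, greedyPicks_insert_self]

lemma improving_inter_eq_filter (S F : Finset γ) :
    M.Improving w S ∩ F = F.filter fun i => i ∉ S ∧ M.GreedyPicks w S i := by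
  ext; simp [mem_improving, and_comm]

lemma OPT_inter_eq_filter (S F : Finset γ) :
    M.OPT w S ∩ F = F.filter fun i => i ∈ S ∧ M.GreedyPicks w S i := by
  ext; simp [OPT_eq_filter, and_comm]

lemma OPT_union_inter_eq_filter (S F : Finset γ) :
    M.OPT w (S ∪ F) ∩ F = F.filter (M.GreedyPicks w (S ∪ F)) := by
  ext; simp +contextual [OPT_eq_filter, and_comm]

lemma OPT_filter_pos (A : Finset γ) : M.OPT w (A.filter (0 < w ·)) = M.OPT w A := by
  ext i
  by_cases hi : 0 < w i
  · have hgt : (A.filter (0 < w ·)).filter (w i < w ·) = A.filter (w i < w ·) := by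
      rw [filter_filter]
      exact filter_congr fun j _ => ⟨And.right, fun h => ⟨hi.trans h, h⟩⟩
    simp [OPT, hi, hgt]
  · simp [OPT, hi]

theorem indep_OPT_and_card_OPT_of_pos (hinj : Function.Injective w) {A : Finset γ}
    (hpos : ∀ x ∈ A, 0 < w x) : M.Indep (M.OPT w A) ∧ #(M.OPT w A) = M.rank A := by
  induction A using Finset.induction_on_min_value w with
  | empty => simp [OPT, M.indep_empty, rank_empty]
  | insert a s has hmin ih =>
    obtain ⟨hOPTs, hcard⟩ := ih fun x hx => hpos x (mem_insert_of_mem hx)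
    have hgt_a : (insert a s).filter (w a < w ·) = s := by
      rw [filter_insert, if_neg (lt_irrefl _)]
      exact filter_true_of_mem fun x hx =>
        (hmin x hx).lt_of_ne fun h => has (hinj h ▸ hx)
    have hpicks : ∀ x ∈ s, M.GreedyPicks w (insert a s) x ↔ M.GreedyPicks w s x := by
      intro x hx
      rw [GreedyPicks, GreedyPicks, filter_insert, if_neg (not_lt_of_ge (hmin x hx))]
    have hOPT : M.OPT w (insert a s) =
        if M.rank s < M.rank (insert a s) then insert a (M.OPT w s) else M.OPT w s := by
      rw [OPT_eq_filter, OPT_eq_filter, filter_insert, filter_congr hpicks]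
      simp [GreedyPicks, hgt_a, hpos a (mem_insert_self a s)]
    have hOPTs_sub : M.OPT w s ⊆ s := filter_subset _ _
    split_ifs at hOPT with hrank
    · rw [hOPT, card_insert_of_notMem fun h => has (hOPTs_sub h)]
      exact ⟨M.indep_insert_of_rank_lt_rank_insert hOPTs_sub hOPTs hcard hrank,
        by have := M.rank_insert_le s a; omega⟩
    · rw [hOPT]
      exact ⟨hOPTs, by have := M.rank_mono (subset_insert a s); omega⟩

theorem indep_OPT (hinj : Function.Injective w) (A : Finset γ) : M.Indep (M.OPT w A) := by
  rw [← OPT_filter_pos]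
  exact (indep_OPT_and_card_OPT_of_pos hinj fun x hx => (mem_filter.1 hx).2).1

theorem card_OPT (hinj : Function.Injective w) (A : Finset γ) :
    #(M.OPT w A) = M.rank (A.filter (0 < w ·)) := by
  rw [← OPT_filter_pos]
  exact (indep_OPT_and_card_OPT_of_pos hinj fun x hx => (mem_filter.1 hx).2).2

lemma card_OPT_inter_le_card_OPT_union_inter (hinj : Function.Injective w) (S F : Finset γ) :
    #(M.OPT w S ∩ F) ≤ #(M.OPT w (S ∪ F) ∩ F) := by
  have hsdiff : M.OPT w (S ∪ F) \ F ⊆ M.OPT w S \ F := by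
    intro d hd
    simp only [OPT_eq_filter, mem_sdiff, mem_filter, mem_union] at hd ⊢
    obtain ⟨⟨hdS | hdF, hpicks⟩, hdF'⟩ := hd
    · exact ⟨⟨hdS, hpicks.anti subset_union_left⟩, hdF'⟩
    · exact absurd hdF hdF'
  have hrank : #(M.OPT w S) ≤ #(M.OPT w (S ∪ F)) := by
    rw [card_OPT hinj, card_OPT hinj]
    exact M.rank_mono (filter_subset_filter _ subset_union_left)
  have := card_le_card hsdiff
  have := card_inter_add_card_sdiff (M.OPT w S) F
  have := card_inter_add_card_sdiff (M.OPT w (S ∪ F)) F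
  omega

lemma card_filter_greedyPicks_union_le_rank_improving_inter (hinj : Function.Injective w)
    (S F : Finset γ) :
    #(F.filter fun i => i ∉ S ∧ M.GreedyPicks w (S ∪ F) i) ≤ M.rank (M.Improving w S ∩ F) := by
  refine M.card_le_rank (fun i hi => ?_) (M.indep_subset (indep_OPT hinj (S ∪ F)) fun i hi => ?_)
  · obtain ⟨hiF, hiS, hpicks⟩ := mem_filter.1 hi
    exact mem_inter.2 ⟨mem_improving.2 ⟨hiS, hpicks.anti subset_union_left⟩, hiF⟩
  · obtain ⟨hiF, -, hpicks⟩ := mem_filter.1 hi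
    rw [OPT_eq_filter]
    exact mem_filter.2 ⟨mem_union_right S hiF, hpicks⟩

end FinMatroid

section ProductMeasure

variable {p : ℝ}

omit [DecidableEq γ] in
lemma prodP_nonneg (h0 : 0 ≤ p) (h1 : p ≤ 1) (S : Finset γ) : 0 ≤ prodP p S :=
  mul_nonneg (pow_nonneg h0 _) (pow_nonneg (sub_nonneg.2 h1) _)

lemma prodP_insert {i : γ} {S : Finset γ} (h : i ∉ S) :
    (1 - p) * prodP p (insert i S) = p * prodP p S := by
  have hcard : #S < Fintype.card γ := card_lt_univ_of_notMem h
  have hsub : Fintype.card γ - #S = Fintype.card γ - (#S + 1) + 1 := by omega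
  rw [prodP, prodP, card_insert_of_notMem h, hsub]
  ring

noncomputable def prodExp (p : ℝ) (f : Finset γ → ℝ) : ℝ := ∑ S, prodP p S * f S

noncomputable def prodProb (p : ℝ) (Q : Finset γ → Prop) : ℝ :=
  prodExp p fun S => if Q S then 1 else 0

omit [DecidableEq γ] in
lemma prodExp_mono (h0 : 0 ≤ p) (h1 : p ≤ 1) {f g : Finset γ → ℝ} (hfg : ∀ S, f S ≤ g S) :
    prodExp p f ≤ prodExp p g :=
  sum_le_sum fun S _ => mul_le_mul_of_nonneg_left (hfg S) (prodP_nonneg h0 h1 S)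

lemma sum_eq_sum_powerset_erase (i : γ) (g : Finset γ → ℝ) :
    ∑ S, g S = ∑ T ∈ (univ.erase i).powerset, (g T + g (insert i T)) := by
  rw [sum_add_distrib, ← sum_powerset_insert (notMem_erase i univ), insert_erase (mem_univ i),
    powerset_univ]

lemma prodProb_mem_and {i : γ} {Q : Finset γ → Prop} (hQ : ∀ S, Q (insert i S) ↔ Q S) :
    prodProb p (fun S => i ∈ S ∧ Q S) = p * prodProb p Q := by
  simp only [prodProb, prodExp]
  rw [sum_eq_sum_powerset_erase i, sum_eq_sum_powerset_erase i, mul_sum]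
  refine sum_congr rfl fun T hT => ?_
  have hiT : i ∉ T := fun h => notMem_erase i univ (mem_powerset.1 hT h)
  have := prodP_insert (p := p) hiT
  simp only [hiT, mem_insert_self, hQ, false_and, true_and, if_false]
  split_ifs
  · linear_combination this
  · ring

lemma prodProb_not_mem_and {i : γ} {Q : Finset γ → Prop} (hQ : ∀ S, Q (insert i S) ↔ Q S) :
    prodProb p (fun S => i ∉ S ∧ Q S) = (1 - p) * prodProb p Q := by
  simp only [prodProb, prodExp]
  rw [sum_eq_sum_powerset_erase i, sum_eq_sum_powerset_erase i, mul_sum]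
  refine sum_congr rfl fun T hT => ?_
  have hiT : i ∉ T := fun h => notMem_erase i univ (mem_powerset.1 hT h)
  have := prodP_insert (p := p) hiT
  simp only [hiT, mem_insert_self, hQ, not_false_eq_true, not_true_eq_false, true_and,
    false_and, if_false]
  split_ifs
  · linear_combination -this
  · ring

omit [DecidableEq γ] in
lemma prodExp_card_filter (F : Finset γ) (P : γ → Finset γ → Prop)
    [∀ S, DecidablePred (P · S)] :
    prodExp p (fun S => (#(F.filter (P · S)) : ℝ)) = ∑ i ∈ F, prodProb p (P i) := by
  simp only [prodProb, prodExp, card_filter, Nat.cast_sum, Nat.cast_ite, Nat.cast_one,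
    Nat.cast_zero, mul_sum]
  rw [sum_comm]
  congr!

lemma prodExp_card_filter_mem_and (Q : γ → Finset γ → Prop) (hQ : ∀ i S, Q i (insert i S) ↔ Q i S)
    (F : Finset γ) :
    prodExp p (fun S => (#(F.filter fun i => i ∈ S ∧ Q i S) : ℝ)) =
      p * ∑ i ∈ F, prodProb p (Q i) := by
  rw [prodExp_card_filter, mul_sum]
  exact sum_congr rfl fun i _ => prodProb_mem_and (hQ i)

lemma prodExp_card_filter_not_mem_and (Q : γ → Finset γ → Prop)
    (hQ : ∀ i S, Q i (insert i S) ↔ Q i S) (F : Finset γ) :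
    prodExp p (fun S => (#(F.filter fun i => i ∉ S ∧ Q i S) : ℝ)) =
      (1 - p) * ∑ i ∈ F, prodProb p (Q i) := by
  rw [prodExp_card_filter, mul_sum]
  exact sum_congr rfl fun i _ => prodProb_not_mem_and (hQ i)

end ProductMeasure

theorem stmt16_general (M : FinMatroid γ) (w : γ → ℝ)
    (hinj : Function.Injective w) (p : ℝ) (hp0 : 0 < p) (hp1 : p < 1) :
    ∀ F : Finset γ,
      ∑ S : Finset γ, prodP p S * ((M.Improving w S ∩ F).card : ℝ) ≤
        (1 / p) * ∑ S : Finset γ, prodP p S * (M.rank (M.Improving w S ∩ F) : ℝ) := by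
  intro F
  have hB : ∀ i S, M.GreedyPicks w (insert i S) i ↔ M.GreedyPicks w S i :=
    fun _ _ => FinMatroid.greedyPicks_insert_self
  have hC : ∀ i S, M.GreedyPicks w (insert i S ∪ F) i ↔ M.GreedyPicks w (S ∪ F) i :=
    fun _ _ => by rw [insert_union, FinMatroid.greedyPicks_insert_self]
  change prodExp p _ ≤ 1 / p * prodExp p _
  rw [one_div, ← div_eq_inv_mul, le_div_iff₀ hp0]
  calc prodExp p (fun S => (#(M.Improving w S ∩ F) : ℝ)) * p
      = (1 - p) * prodExp p (fun S => (#(M.OPT w S ∩ F) : ℝ)) := by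
        simp only [FinMatroid.improving_inter_eq_filter, FinMatroid.OPT_inter_eq_filter,
          prodExp_card_filter_not_mem_and (fun i S => M.GreedyPicks w S i) hB,
          prodExp_card_filter_mem_and (fun i S => M.GreedyPicks w S i) hB]
        ring
    _ ≤ (1 - p) * prodExp p (fun S => (#(M.OPT w (S ∪ F) ∩ F) : ℝ)) :=
        mul_le_mul_of_nonneg_left (prodExp_mono hp0.le hp1.le fun S => by
          exact_mod_cast FinMatroid.card_OPT_inter_le_card_OPT_union_inter hinj S F) (by linarith)
    _ = prodExp p (fun S => (#(F.filter fun i => i ∉ S ∧ M.GreedyPicks w (S ∪ F) i) : ℝ)) := by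
        simp only [FinMatroid.OPT_union_inter_eq_filter, prodExp_card_filter,
          prodExp_card_filter_not_mem_and (fun i S => M.GreedyPicks w (S ∪ F) i) hC]
    _ ≤ prodExp p (fun S => (M.rank (M.Improving w S ∩ F) : ℝ)) :=
        prodExp_mono hp0.le hp1.le fun S => by
          exact_mod_cast FinMatroid.card_filter_greedyPicks_union_le_rank_improving_inter hinj S F

/-- the random set of improving elements with parameter `p` is
`(1/p)`-uncontentious: `E[|R ∩ F|] ≤ (1/p) · E[rank(R ∩ F)]` for every `F`. -/
theorem stmt16 (M : FinMatroid γ) (w : γ → ℝ) (hw : ∀ i, 0 ≤ w i)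
    (hinj : Function.Injective w) (p : ℝ) (hp0 : 0 < p) (hp1 : p < 1) :
    ∀ F : Finset γ,
      ∑ S : Finset γ, prodP p S * ((M.Improving w S ∩ F).card : ℝ) ≤
        (1 / p) * ∑ S : Finset γ, prodP p S * (M.rank (M.Improving w S ∩ F) : ℝ) :=
  stmt16_general M w hinj p hp0 hp1
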